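/- For n ≡ 1 (mod 3), n ≥ 4, the stability of the strong domination number of the path P_n equals 1; that is, there exists a vertex v of P_n with γ_st(P_n − v) ≠ γ_st(P_n). -/

import Mathlib

open SimpleGraph

/-- `D` is a strong dominating set of `G`: every vertex outside `D` has a neighbor
in `D` whose degree is at least its own. -/
def IsStrongDominating {V : Type*} (G : SimpleGraph V) (D : Set V) : Prop :=
  ∀ v ∉ D, ∃ u ∈ D, G.Adj v u ∧ (G.neighborSet v).ncard ≤ (G.neighborSet u).ncard

/-- The strong domination number. -/
noncomputable def gammaSt {V : Type*} (G : SimpleGraph V) : ℕ :=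
  sInf {n | ∃ D : Set V, D.Finite ∧ IsStrongDominating G D ∧ D.ncard = n}

/-- The stability of the strong domination number: the minimum size of a vertex set
whose removal changes the strong domination number. -/
noncomputable def stGammaSt {V : Type*} (G : SimpleGraph V) : ℕ :=
  sInf {n | ∃ S : Set V, S.Finite ∧ S.ncard = n ∧ gammaSt (G.induce Sᶜ) ≠ gammaSt G}

/-- The join of two graphs. -/
def joinG {V W : Type*} (G : SimpleGraph V) (H : SimpleGraph W) : SimpleGraph (V ⊕ W) :=
  SimpleGraph.fromRel (fun x y =>
    match x, y with
    | Sum.inl a, Sum.inl b => G.Adj a b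
    | Sum.inr a, Sum.inr b => H.Adj a b
    | _, _ => True)

/-- `n` disjoint copies of `K₂`. -/
def nK2 (n : ℕ) : SimpleGraph (Fin n × Fin 2) where
  Adj x y := x.1 = y.1 ∧ x.2 ≠ y.2
  symm := ⟨fun x y h => ⟨h.1.symm, h.2.symm⟩⟩
  loopless := ⟨fun x h => h.2 rfl⟩

/-!
A strong dominating set of a graph of maximum degree `2` covers at most `3` vertices per element,
so `γ_st(P_n) ≥ ⌈n/3⌉`; for `n % 3 ≠ 2` the vertices `1, 4, 7, …` (together with the last vertex
when `n % 3 = 1`) attain this bound, each dominator being an inner vertex of degree `2`. Hence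
`γ_st(P_{3k+1}) = k + 1`, while deleting the last vertex leaves `P_{3k}` with `γ_st = k`.
-/

namespace SimpleGraph

variable {V W : Type*} {G : SimpleGraph V} {H : SimpleGraph W}

lemma Iso.ncard_neighborSet (e : G ≃g H) (v : V) :
    (H.neighborSet (e v)).ncard = (G.neighborSet v).ncard := by
  rw [← Nat.card_coe_set_eq, ← Nat.card_coe_set_eq]
  exact Nat.card_congr (e.mapNeighborSet v).symm

lemma IsStrongDominating.image_iso (e : G ≃g H) {D : Set V} (hD : IsStrongDominating G D) :
    IsStrongDominating H (e '' D) := by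
  intro w hw
  obtain ⟨v, rfl⟩ := e.surjective w
  obtain ⟨u, hu, hadj, hle⟩ := hD v fun hv => hw ⟨v, hv, rfl⟩
  refine ⟨e u, ⟨u, hu, rfl⟩, e.map_adj_iff.2 hadj, ?_⟩
  rwa [e.ncard_neighborSet, e.ncard_neighborSet]

lemma gammaSt_congr (e : G ≃g H) : gammaSt G = gammaSt H := by
  unfold gammaSt
  congr 1
  ext m
  constructor
  · rintro ⟨D, hfin, hD, rfl⟩
    exact ⟨e '' D, hfin.image e, hD.image_iso e, Set.ncard_image_of_injective D e.injective⟩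
  · rintro ⟨D, hfin, hD, rfl⟩
    exact ⟨e.symm '' D, hfin.image e.symm, hD.image_iso e.symm,
      Set.ncard_image_of_injective D e.symm.injective⟩

lemma gammaSt_le_ncard {D : Set V} (hfin : D.Finite) (hD : IsStrongDominating G D) :
    gammaSt G ≤ D.ncard :=
  Nat.sInf_le ⟨D, hfin, hD, rfl⟩

lemma le_gammaSt [Finite V] {m : ℕ} (h : ∀ D, IsStrongDominating G D → m ≤ D.ncard) :
    m ≤ gammaSt G := by
  have huniv : IsStrongDominating G Set.univ := fun _ hv => (hv trivial).elim
  refine le_csInf ⟨_, Set.univ, Set.toFinite _, huniv, rfl⟩ ?_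
  rintro _ ⟨D, -, hD, rfl⟩
  exact h D hD

lemma IsStrongDominating.card_le_mul_ncard [Finite V] {d : ℕ}
    (hdeg : ∀ v, (G.neighborSet v).ncard ≤ d) {D : Set V} (hD : IsStrongDominating G D) :
    Nat.card V ≤ (d + 1) * D.ncard := by
  set F := (Set.toFinite D).toFinset
  have hcover : (Set.univ : Set V) ⊆ ⋃ u ∈ F, insert u (G.neighborSet u) := by
    intro v _
    by_cases hv : v ∈ D
    · exact Set.mem_biUnion (by simpa [F] using hv) (Set.mem_insert v _)
    · obtain ⟨u, hu, hadj, -⟩ := hD v hv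
      exact Set.mem_biUnion (by simpa [F] using hu) (Set.mem_insert_of_mem u hadj.symm)
  calc Nat.card V = (Set.univ : Set V).ncard := (Set.ncard_univ V).symm
    _ ≤ (⋃ u ∈ F, insert u (G.neighborSet u)).ncard := Set.ncard_le_ncard hcover
    _ ≤ ∑ u ∈ F, (insert u (G.neighborSet u)).ncard := F.set_ncard_biUnion_le _
    _ ≤ F.card • (d + 1) := Finset.sum_le_card_nsmul _ _ _ fun u _ =>
        (Set.ncard_insert_le u _).trans (Nat.succ_le_succ (hdeg u))
    _ = (d + 1) * D.ncard := by
        rw [smul_eq_mul, mul_comm, Set.ncard_eq_toFinset_card D]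

lemma stGammaSt_eq_one_of_gammaSt_induce_ne (v : V)
    (h : gammaSt (G.induce {v}ᶜ) ≠ gammaSt G) : stGammaSt G = 1 := by
  have hone : 1 ∈ {n | ∃ S : Set V, S.Finite ∧ S.ncard = n ∧
      gammaSt (G.induce Sᶜ) ≠ gammaSt G} :=
    ⟨{v}, Set.finite_singleton v, Set.ncard_singleton v, h⟩
  refine (Nat.sInf_le hone).antisymm (Nat.one_le_iff_ne_zero.2 fun h0 => ?_)
  obtain ⟨S, hfin, hS, hne⟩ :=
    (Nat.sInf_eq_zero.1 h0).resolve_right (Set.nonempty_of_mem hone).ne_empty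
  rw [(Set.ncard_eq_zero hfin).1 hS, Set.compl_empty] at hne
  exact hne (gammaSt_congr G.induceUnivIso)

lemma ncard_neighborSet_pathGraph_le_two {n : ℕ} (v : Fin n) :
    ((pathGraph n).neighborSet v).ncard ≤ 2 := by
  have hmaps : Set.MapsTo Fin.val ((pathGraph n).neighborSet v) {v.val - 1, v.val + 1} := by
    intro w hw
    rw [mem_neighborSet, pathGraph_adj] at hw
    simp only [Set.mem_insert_iff, Set.mem_singleton_iff]
    omega
  calc ((pathGraph n).neighborSet v).ncard ≤ ({v.val - 1, v.val + 1} : Set ℕ).ncard :=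
        Set.ncard_le_ncard_of_injOn _ hmaps Fin.val_injective.injOn (Set.toFinite _)
    _ ≤ 2 := (Set.ncard_insert_le _ _).trans (by rw [Set.ncard_singleton])

lemma ncard_neighborSet_pathGraph_eq_two {n : ℕ} {v : Fin n} (h0 : 0 < v.val)
    (hlt : v.val + 1 < n) : ((pathGraph n).neighborSet v).ncard = 2 := by
  have hset : (pathGraph n).neighborSet v = {⟨v.val - 1, by omega⟩, ⟨v.val + 1, hlt⟩} := by
    ext w
    simp only [mem_neighborSet, pathGraph_adj, Set.mem_insert_iff, Set.mem_singleton_iff,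
      Fin.ext_iff]
    omega
  rw [hset, Set.ncard_pair (by simp only [ne_eq, Fin.ext_iff]; omega)]

/-- The vertices `1, 4, 7, …` of `P_n`, with `3k + 1` truncated to the last vertex. -/
def pathDom (n : ℕ) : Set (Fin n) :=
  Set.range fun i : Fin ((n + 2) / 3) => (⟨min (3 * i + 1) (n - 1), by omega⟩ : Fin n)

lemma ncard_pathDom_le (n : ℕ) : (pathDom n).ncard ≤ (n + 2) / 3 := by
  rw [pathDom, ← Set.image_univ]
  exact (Set.ncard_image_le (Set.toFinite _)).trans (by simp)

lemma isStrongDominating_pathDom {n : ℕ} (hn : n % 3 ≠ 2) :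
    IsStrongDominating (pathGraph n) (pathDom n) := by
  have mem (v : Fin n) (hv : v.val % 3 = 1 ∨ v.val + 1 = n ∧ v.val % 3 = 0) : v ∈ pathDom n := by
    have := v.isLt
    exact ⟨⟨v.val / 3, by omega⟩, Fin.ext (show min (3 * (v.val / 3) + 1) (n - 1) = v.val by omega)⟩
  intro v hv
  obtain ⟨u, hu, hadj, hu0, hun⟩ :
      ∃ u ∈ pathDom n, (pathGraph n).Adj v u ∧ 0 < u.val ∧ u.val + 1 < n := by
    have hv1 : v.val % 3 ≠ 1 := fun h => hv (mem v (.inl h))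
    have hvn : ¬(v.val + 1 = n ∧ v.val % 3 = 0) := fun h => hv (mem v (.inr h))
    obtain h0 | h2 : v.val % 3 = 0 ∨ v.val % 3 = 2 := by omega
    · exact ⟨⟨v.val + 1, by omega⟩, mem _ (.inl (by simp only; omega)),
        pathGraph_adj.2 (.inl rfl), by simp only; omega, by simp only; omega⟩
    · exact ⟨⟨v.val - 1, by omega⟩, mem _ (.inl (by simp only; omega)),
        pathGraph_adj.2 (.inr (by simp only; omega)), by simp only; omega, by simp only; omega⟩
  exact ⟨u, hu, hadj,
    (ncard_neighborSet_pathGraph_le_two v).trans (ncard_neighborSet_pathGraph_eq_two hu0 hun).ge⟩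

lemma gammaSt_pathGraph {n : ℕ} (hn : n % 3 ≠ 2) : gammaSt (pathGraph n) = (n + 2) / 3 := by
  refine ((gammaSt_le_ncard (Set.toFinite _) (isStrongDominating_pathDom hn)).trans
    (ncard_pathDom_le n)).antisymm (le_gammaSt fun D hD => ?_)
  have := hD.card_le_mul_ncard ncard_neighborSet_pathGraph_le_two
  rw [Nat.card_eq_fintype_card, Fintype.card_fin] at this
  omega

def pathGraphInduceComplLastIso (n : ℕ) :
    (pathGraph (n + 1)).induce {Fin.last n}ᶜ ≃g pathGraph n where
  toFun v := v.1.castPred v.2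
  invFun v := ⟨v.castSucc, v.castSucc_ne_last⟩
  left_inv v := Subtype.ext (Fin.castSucc_castPred _ _)
  right_inv _ := Fin.castPred_castSucc
  map_rel_iff' := by
    simp only [Equiv.coe_fn_mk, comap_adj, Function.Embedding.coe_subtype, pathGraph_adj]
    exact Iff.rfl

end SimpleGraph

theorem stGammaSt_pathGraph_one_general (n : ℕ) (hmod : n % 3 = 1) :
    stGammaSt (pathGraph n) = 1 := by
  obtain ⟨m, rfl⟩ : ∃ m, n = m + 1 := ⟨n - 1, by omega⟩
  refine stGammaSt_eq_one_of_gammaSt_induce_ne (Fin.last m) ?_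
  rw [gammaSt_congr (pathGraphInduceComplLastIso m), gammaSt_pathGraph (by omega),
    gammaSt_pathGraph (by omega)]
  omega

theorem stGammaSt_pathGraph_one (n : ℕ) (hn : 4 ≤ n) (hmod : n % 3 = 1) :
    stGammaSt (pathGraph n) = 1 :=
  stGammaSt_pathGraph_one_general n hmod
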